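/- For every integer k ≥ 2, there exists a uniquely k-dimensional finite connected simple graph of order ⌈5k/2⌉ + 1. -/

import Mathlib

open SimpleGraph

/-- `W` is a resolving set for `G`: any two distinct vertices are distinguished
by their distance to some vertex of `W`. -/
def IsResolvingSet {V : Type*} (G : SimpleGraph V) (W : Finset V) : Prop :=
  ∀ u v : V, u ≠ v → ∃ w ∈ W, G.dist u w ≠ G.dist v w

/-- The metric dimension of `G`: the minimum cardinality of a resolving set. -/
noncomputable def metricDim {V : Type*} (G : SimpleGraph V) : ℕ :=
  sInf {k | ∃ W : Finset V, IsResolvingSet G W ∧ W.card = k}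

/-- `B` is a metric basis: a resolving set of minimum cardinality. -/
def IsMetricBasis {V : Type*} (G : SimpleGraph V) (B : Finset V) : Prop :=
  IsResolvingSet G B ∧ B.card = metricDim G

/-- `G` is uniquely dimensional: it has exactly one metric basis. -/
def UniquelyDimensional {V : Type*} (G : SimpleGraph V) : Prop :=
  ∃! B : Finset V, IsMetricBasis G B

/-- `G` is uniquely `k`-dimensional: a unique metric basis and metric dimension `k`. -/
def UniquelyKDimensional {V : Type*} (G : SimpleGraph V) (k : ℕ) : Prop :=
  UniquelyDimensional G ∧ metricDim G = k

/-!
In the cone over a join of graphs `H i`, any two vertices are at distance at most 2, and a vertex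
outside the part `H i` is at distance 1 from all of it. So a resolving set must resolve each `H i`
by adjacency alone, which costs at least its adjacency dimension; a resolving set of exactly that
total size therefore avoids the apex, and each of its parts must then have no common neighbour in
`H i`, since nothing else separates the vertices of `H i` from the apex. So if each `H i` has a
minimum adjacency resolving set that is the only one without a common neighbour, the cone has a
unique metric basis.
Two such gadgets, on 5 and 8 vertices with adjacency dimensions 2 and 3, are verified exhaustively;
writing `k = 2m + 3e` with `e ≤ 1` gives order `5m + 8e + 1 = ⌈5k/2⌉ + 1`.
-/

open Finset

lemma IsResolvingSet.uniquelyKDimensional {V : Type*} {G : SimpleGraph V} {B : Finset V}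
    (hB : IsResolvingSet G B) (hmin : ∀ W, IsResolvingSet G W → #W ≤ #B → W = B) :
    UniquelyKDimensional G #B := by
  have hdim : metricDim G = #B := by
    refine le_antisymm (Nat.sInf_le ⟨B, hB, rfl⟩) (le_csInf ⟨_, B, hB, rfl⟩ ?_)
    rintro _ ⟨W, hW, rfl⟩
    by_contra! hlt
    exact hlt.ne (congrArg card (hmin W hW hlt.le))
  exact ⟨⟨B, ⟨hB, hdim.symm⟩, fun W hW => hmin W hW.1 (hW.2.trans hdim).le⟩, hdim⟩

namespace Finset

variable {ι : Type*} {V : ι → Type*}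

noncomputable abbrev sigmaFiber (T : Finset (Σ i, V i)) (i : ι) : Finset (V i) :=
  T.preimage (Sigma.mk i) sigma_mk_injective.injOn

lemma sigmaFiber_sigma [Fintype ι] (S : ∀ i, Finset (V i)) (i : ι) :
    (univ.sigma S).sigmaFiber i = S i := by
  ext; simp

lemma card_eq_sum_card_sigmaFiber [Fintype ι] [DecidableEq ι] (T : Finset (Σ i, V i)) :
    #T = ∑ i, #(T.sigmaFiber i) := by
  rw [← card_sigma, sigma_preimage_mk_of_subset T (subset_univ _)]

end Finset

namespace SimpleGraph

section AdjacencyResolving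

variable {V : Type*} (H : SimpleGraph V) [DecidableEq V] [DecidableRel H.Adj]

/- The distance from `a` to `b` in any graph of diameter at most 2 that contains `H` as an induced
subgraph. -/
def adjDist (a b : V) : ℕ :=
  if a = b then 0 else if H.Adj a b then 1 else 2

def IsAdjResolvingSet (T : Finset V) : Prop :=
  ∀ a b, a ≠ b → ∃ s ∈ T, H.adjDist a s ≠ H.adjDist b s

def HasNoCommonNeighbor (T : Finset V) : Prop :=
  ∀ a, ∃ s ∈ T, ¬ H.Adj a s

instance [Fintype V] (T : Finset V) : Decidable (H.IsAdjResolvingSet T) := by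
  unfold IsAdjResolvingSet; infer_instance

instance [Fintype V] (T : Finset V) : Decidable (H.HasNoCommonNeighbor T) := by
  unfold HasNoCommonNeighbor; infer_instance

variable {H} in
lemma adjDist_ne_one_iff {a b : V} : H.adjDist a b ≠ 1 ↔ ¬ H.Adj a b := by
  unfold adjDist
  split_ifs with hab hadj <;> simp_all

/- The cardinality hypotheses come first so that `decide` only examines small sets. -/
structure IsConeGadget (S : Finset V) : Prop where
  isAdjResolvingSet : H.IsAdjResolvingSet S
  hasNoCommonNeighbor : H.HasNoCommonNeighbor S
  not_isAdjResolvingSet_of_card_lt : ∀ T, #T < #S → ¬ H.IsAdjResolvingSet T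
  eq_of_card_le : ∀ T, #T ≤ #S → H.IsAdjResolvingSet T → H.HasNoCommonNeighbor T → T = S

end AdjacencyResolving

section Cone

variable {V : Type*}

def cone (G : SimpleGraph V) : SimpleGraph (Option V) :=
  G.map Function.Embedding.some ⊔ fromRel fun u _ => u = none

variable {G : SimpleGraph V}

@[simp]
lemma cone_adj_some_some {a b : V} : (cone G).Adj (some a) (some b) ↔ G.Adj a b := by
  simp only [cone, sup_adj, fromRel_adj, reduceCtorEq, or_self, and_false, or_false]
  exact map_adj_apply (f := .some)

@[simp]
lemma cone_adj_none_some (a : V) : (cone G).Adj none (some a) := by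
  simp [cone]

lemma cone_connected : (cone G).Connected := by
  have hnone : ∀ u, (cone G).Reachable none u
    | none => .rfl
    | some a => (cone_adj_none_some a).reachable
  exact ⟨fun u v => (hnone u).symm.trans (hnone v)⟩

lemma dist_cone_none_some (a : V) : (cone G).dist none (some a) = 1 :=
  dist_eq_one_iff_adj.2 (cone_adj_none_some a)

lemma dist_cone_some_some [DecidableEq V] [DecidableRel G.Adj] (a b : V) :
    (cone G).dist (some a) (some b) = G.adjDist a b := by
  unfold adjDist
  split_ifs with hab hadj
  · simp [hab]
  · exact dist_eq_one_iff_adj.2 (cone_adj_some_some.2 hadj)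
  · have hle : (cone G).dist (some a) (some b) ≤ 2 :=
      dist_le ((cone_adj_none_some a).symm.toWalk.append (cone_adj_none_some b).toWalk)
    have hlt := cone_connected.one_lt_dist_of_ne_of_not_adj
      ((Option.some_injective _).ne hab) (mt cone_adj_some_some.1 hadj)
    omega

variable [DecidableEq V] [DecidableRel G.Adj]

lemma isResolvingSet_cone_map_some_iff {T : Finset V} :
    IsResolvingSet (cone G) (T.map .some) ↔ G.IsAdjResolvingSet T ∧ G.HasNoCommonNeighbor T := by
  simp only [IsResolvingSet, mem_map, Function.Embedding.some_apply, exists_exists_and_eq_and]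
  refine ⟨fun h => ⟨fun a b hab => ?_, fun a => ?_⟩, fun ⟨hres, hnc⟩ => ?_⟩
  · simpa only [dist_cone_some_some] using h (some a) (some b) (by simpa)
  · obtain ⟨s, hs, hne⟩ := h none (some a) (by simp)
    rw [dist_cone_none_some, dist_cone_some_some] at hne
    exact ⟨s, hs, adjDist_ne_one_iff.1 (Ne.symm hne)⟩
  · rintro (_ | a) (_ | b) huv
    · exact absurd rfl huv
    · obtain ⟨s, hs, hb⟩ := hnc b
      refine ⟨s, hs, ?_⟩
      rw [dist_cone_none_some, dist_cone_some_some]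
      exact (adjDist_ne_one_iff.2 hb).symm
    · obtain ⟨s, hs, ha⟩ := hnc a
      refine ⟨s, hs, ?_⟩
      rw [dist_cone_none_some, dist_cone_some_some]
      exact adjDist_ne_one_iff.2 ha
    · simpa only [dist_cone_some_some] using hres a b (by simpa using huv)

lemma _root_.IsResolvingSet.isAdjResolvingSet_eraseNone {W : Finset (Option V)}
    (hW : IsResolvingSet (cone G) W) : G.IsAdjResolvingSet (eraseNone W) := by
  intro a b hab
  obtain ⟨_ | s, hs, hne⟩ := hW (some a) (some b) (by simpa)
  · simp [dist_comm (u := some _), dist_cone_none_some] at hne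
  · exact ⟨s, mem_eraseNone.2 hs, by simpa [dist_cone_some_some] using hne⟩

end Cone

section SigmaJoin

variable {ι : Type*} {V : ι → Type*}

def sigmaJoin (H : ∀ i, SimpleGraph (V i)) : SimpleGraph (Σ i, V i) :=
  completeMultipartiteGraph V ⊔ ⨆ i, (H i).map (Function.Embedding.sigmaMk i)

variable {H : ∀ i, SimpleGraph (V i)}

@[simp]
lemma sigmaJoin_adj_mk_mk_self {i : ι} {x y : V i} :
    (sigmaJoin H).Adj ⟨i, x⟩ ⟨i, y⟩ ↔ (H i).Adj x y := by
  simp only [sigmaJoin, sup_adj, iSup_adj, map_adj, Function.Embedding.sigmaMk_apply,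
    Sigma.mk.inj_iff, completeMultipartiteGraph, comap_adj, top_adj, ne_eq, not_true, false_or]
  constructor
  · rintro ⟨j, u, v, huv, ⟨rfl, hu⟩, -, hv⟩
    cases hu; cases hv; exact huv
  · exact fun hxy => ⟨i, x, y, hxy, ⟨rfl, .rfl⟩, rfl, .rfl⟩

lemma sigmaJoin_adj_of_ne {i j : ι} (x : V i) (y : V j) (hij : i ≠ j) :
    (sigmaJoin H).Adj ⟨i, x⟩ ⟨j, y⟩ := by
  simp [sigmaJoin, hij]

end SigmaJoin

section SigmaFiber

variable {ι : Type*} {V : ι → Type*} {H : ∀ i, SimpleGraph (V i)} {T : Finset (Σ i, V i)}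

lemma HasNoCommonNeighbor.sigmaFiber (hT : (sigmaJoin H).HasNoCommonNeighbor T) (i : ι) :
    (H i).HasNoCommonNeighbor (T.sigmaFiber i) := by
  intro x
  obtain ⟨⟨j, s⟩, hs, hadj⟩ := hT ⟨i, x⟩
  obtain rfl | hij := eq_or_ne i j
  · exact ⟨s, by simpa, by simpa using hadj⟩
  · exact absurd (sigmaJoin_adj_of_ne x s hij) hadj

lemma hasNoCommonNeighbor_sigmaJoin (h : ∀ i, (H i).HasNoCommonNeighbor (T.sigmaFiber i)) :
    (sigmaJoin H).HasNoCommonNeighbor T := by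
  rintro ⟨i, x⟩
  obtain ⟨s, hs, hadj⟩ := h i x
  exact ⟨⟨i, s⟩, by simpa using hs, by simpa using hadj⟩

variable [DecidableEq ι] [∀ i, DecidableEq (V i)] [DecidableRel (sigmaJoin H).Adj]

lemma adjDist_sigmaJoin_of_ne {i j : ι} (x : V i) (y : V j) (hij : i ≠ j) :
    (sigmaJoin H).adjDist ⟨i, x⟩ ⟨j, y⟩ = 1 := by
  simp [adjDist, hij, sigmaJoin_adj_of_ne]

variable [∀ i, DecidableRel (H i).Adj]

lemma adjDist_sigmaJoin_mk_mk_self {i : ι} (x y : V i) :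
    (sigmaJoin H).adjDist ⟨i, x⟩ ⟨i, y⟩ = (H i).adjDist x y := by
  simp [adjDist]

lemma IsAdjResolvingSet.sigmaFiber (hT : (sigmaJoin H).IsAdjResolvingSet T) (i : ι) :
    (H i).IsAdjResolvingSet (T.sigmaFiber i) := by
  intro x y hxy
  obtain ⟨⟨j, s⟩, hs, hne⟩ := hT ⟨i, x⟩ ⟨i, y⟩ (by simpa)
  obtain rfl | hij := eq_or_ne i j
  · exact ⟨s, by simpa, by simpa [adjDist_sigmaJoin_mk_mk_self] using hne⟩
  · simp [adjDist_sigmaJoin_of_ne _ _ hij] at hne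

lemma isAdjResolvingSet_sigmaJoin (hres : ∀ i, (H i).IsAdjResolvingSet (T.sigmaFiber i))
    (hnc : ∀ i, (H i).HasNoCommonNeighbor (T.sigmaFiber i)) :
    (sigmaJoin H).IsAdjResolvingSet T := by
  rintro ⟨i, x⟩ ⟨j, y⟩ hne
  obtain rfl | hij := eq_or_ne i j
  · obtain ⟨s, hs, hd⟩ := hres i x y (by rintro rfl; exact hne rfl)
    exact ⟨⟨i, s⟩, by simpa using hs, by simpa [adjDist_sigmaJoin_mk_mk_self] using hd⟩
  · obtain ⟨s, hs, hadj⟩ := hnc i x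
    refine ⟨⟨i, s⟩, by simpa using hs, ?_⟩
    rw [adjDist_sigmaJoin_mk_mk_self, adjDist_sigmaJoin_of_ne _ _ hij.symm]
    exact adjDist_ne_one_iff.2 hadj

end SigmaFiber

section ConeOverJoin

variable {ι : Type*} [Fintype ι] {V : ι → Type*} [∀ i, DecidableEq (V i)]
  {H : ∀ i, SimpleGraph (V i)} [∀ i, DecidableRel (H i).Adj] {S : ∀ i, Finset (V i)}

lemma isResolvingSet_cone_sigmaJoin (hS : ∀ i, (H i).IsConeGadget (S i)) :
    IsResolvingSet (cone (sigmaJoin H)) ((univ.sigma S).map .some) := by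
  classical
  have hres i : (H i).IsAdjResolvingSet ((univ.sigma S).sigmaFiber i) :=
    sigmaFiber_sigma S i ▸ (hS i).isAdjResolvingSet
  have hnc i : (H i).HasNoCommonNeighbor ((univ.sigma S).sigmaFiber i) :=
    sigmaFiber_sigma S i ▸ (hS i).hasNoCommonNeighbor
  exact isResolvingSet_cone_map_some_iff.2
    ⟨isAdjResolvingSet_sigmaJoin hres hnc, hasNoCommonNeighbor_sigmaJoin hnc⟩

lemma eq_of_isResolvingSet_cone_sigmaJoin (hS : ∀ i, (H i).IsConeGadget (S i))
    {W : Finset (Option (Σ i, V i))} (hW : IsResolvingSet (cone (sigmaJoin H)) W)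
    (hcard : #W ≤ ∑ i, #(S i)) : W = (univ.sigma S).map .some := by
  classical
  set T := eraseNone W
  have hfiber i : #(S i) ≤ #(T.sigmaFiber i) := not_lt.1 fun hlt =>
    (hS i).not_isAdjResolvingSet_of_card_lt _ hlt (hW.isAdjResolvingSet_eraseNone.sigmaFiber i)
  have hsum : ∑ i, #(T.sigmaFiber i) = ∑ i, #(S i) := by
    refine le_antisymm ?_ (sum_le_sum fun i _ => hfiber i)
    rw [← card_eq_sum_card_sigmaFiber]
    exact (card_eraseNone_le W).trans hcard
  have hnone : none ∉ W := by
    intro h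
    have : #T = #W - 1 := card_eraseNone_of_mem h
    have := card_pos.2 ⟨_, h⟩
    have := card_eq_sum_card_sigmaFiber T
    omega
  have hWT : W = T.map .some := by rw [map_some_eraseNone, erase_eq_of_notMem hnone]
  rw [hWT, isResolvingSet_cone_map_some_iff] at hW
  have hfiber_eq i : T.sigmaFiber i = S i :=
    (hS i).eq_of_card_le _
      ((sum_eq_sum_iff_of_le fun i _ => hfiber i).1 hsum.symm i (mem_univ i)).ge
      (hW.1.sigmaFiber i) (hW.2.sigmaFiber i)
  rw [hWT, ← sigma_preimage_mk_of_subset T (subset_univ _)]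
  simp only [hfiber_eq]

theorem uniquelyKDimensional_cone_sigmaJoin (hS : ∀ i, (H i).IsConeGadget (S i)) :
    UniquelyKDimensional (cone (sigmaJoin H)) (∑ i, #(S i)) := by
  have hcard : #((univ.sigma S).map .some) = ∑ i, #(S i) := by rw [card_map, card_sigma]
  rw [← hcard]
  exact (isResolvingSet_cone_sigmaJoin hS).uniquelyKDimensional fun W hW hle =>
    eq_of_isResolvingSet_cone_sigmaJoin hS hW (hcard ▸ hle)

end ConeOverJoin

end SimpleGraph

namespace SimpleGraph.Iso

variable {V V' : Type*} {G : SimpleGraph V} {G' : SimpleGraph V'}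

lemma dist_eq (φ : G ≃g G') (u v : V) : G'.dist (φ u) (φ v) = G.dist u v := by
  simp only [dist_eq_sInf]
  congr 1
  ext n
  constructor
  · rintro ⟨q, rfl⟩
    exact ⟨(q.map φ.symm.toHom).copy (φ.symm_apply_apply u) (φ.symm_apply_apply v), by simp⟩
  · rintro ⟨p, rfl⟩
    exact ⟨p.map φ.toHom, by simp⟩

lemma isResolvingSet_finsetCongr_iff (φ : G ≃g G') (W : Finset V) :
    IsResolvingSet G' (φ.toEquiv.finsetCongr W) ↔ IsResolvingSet G W := by
  rw [Equiv.finsetCongr_apply]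
  constructor
  · intro h u v huv
    obtain ⟨w', hw', hne⟩ := h (φ u) (φ v) (φ.injective.ne huv)
    obtain ⟨w, hw, rfl⟩ := Finset.mem_map.1 hw'
    exact ⟨w, hw, by simpa [φ.dist_eq] using hne⟩
  · intro h u' v' huv
    obtain ⟨u, rfl⟩ := φ.surjective u'
    obtain ⟨v, rfl⟩ := φ.surjective v'
    obtain ⟨w, hw, hne⟩ := h u v (by rintro rfl; exact huv rfl)
    exact ⟨φ w, Finset.mem_map_of_mem _ hw, by rwa [φ.dist_eq, φ.dist_eq]⟩

lemma metricDim_eq (φ : G ≃g G') : metricDim G' = metricDim G := by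
  unfold metricDim
  congr 1
  ext k
  refine (φ.toEquiv.finsetCongr.exists_congr fun W => ?_).symm
  rw [φ.isResolvingSet_finsetCongr_iff, Equiv.finsetCongr_apply, Finset.card_map]

lemma uniquelyKDimensional_iff (φ : G ≃g G') {k : ℕ} :
    UniquelyKDimensional G' k ↔ UniquelyKDimensional G k := by
  refine and_congr (φ.toEquiv.finsetCongr.existsUnique_congr fun W => ?_).symm
    (by rw [φ.metricDim_eq])
  rw [IsMetricBasis, IsMetricBasis, φ.isResolvingSet_finsetCongr_iff, Equiv.finsetCongr_apply,
    Finset.card_map, φ.metricDim_eq]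

end SimpleGraph.Iso

def gadget5 : SimpleGraph (Fin 5) :=
  fromEdgeSet {s(0, 1), s(0, 2), s(0, 4), s(1, 2), s(1, 3)}

def gadget8 : SimpleGraph (Fin 8) :=
  fromEdgeSet {s(0, 4), s(0, 5), s(0, 6), s(1, 2), s(1, 4), s(1, 5), s(1, 6), s(1, 7), s(2, 3),
    s(2, 4), s(2, 5), s(2, 7), s(3, 7), s(4, 5), s(4, 6), s(4, 7)}

instance : DecidableRel gadget5.Adj := fun _ _ => by unfold gadget5; infer_instance

instance : DecidableRel gadget8.Adj := fun _ _ => by unfold gadget8; infer_instance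

lemma isConeGadget_gadget5 : gadget5.IsConeGadget {3, 4} :=
  ⟨by decide, by decide, by decide +kernel, by decide +kernel⟩

lemma isConeGadget_gadget8 : gadget8.IsConeGadget {0, 3, 5} :=
  ⟨by decide, by decide, by decide +kernel, by decide +kernel⟩

def GadgetVertex (m e : ℕ) : Fin m ⊕ Fin e → Type
  | .inl _ => Fin 5
  | .inr _ => Fin 8

instance (m e : ℕ) : ∀ i, Fintype (GadgetVertex m e i)
  | .inl _ => inferInstanceAs (Fintype (Fin 5))
  | .inr _ => inferInstanceAs (Fintype (Fin 8))

instance (m e : ℕ) : ∀ i, DecidableEq (GadgetVertex m e i)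
  | .inl _ => inferInstanceAs (DecidableEq (Fin 5))
  | .inr _ => inferInstanceAs (DecidableEq (Fin 8))

def gadgets (m e : ℕ) : ∀ i, SimpleGraph (GadgetVertex m e i)
  | .inl _ => gadget5
  | .inr _ => gadget8

instance (m e : ℕ) : ∀ i, DecidableRel (gadgets m e i).Adj
  | .inl _ => inferInstanceAs (DecidableRel gadget5.Adj)
  | .inr _ => inferInstanceAs (DecidableRel gadget8.Adj)

def gadgetBases (m e : ℕ) : ∀ i, Finset (GadgetVertex m e i)
  | .inl _ => ({3, 4} : Finset (Fin 5))
  | .inr _ => ({0, 3, 5} : Finset (Fin 8))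

lemma isConeGadget_gadgets (m e : ℕ) : ∀ i, (gadgets m e i).IsConeGadget (gadgetBases m e i)
  | .inl _ => isConeGadget_gadget5
  | .inr _ => isConeGadget_gadget8

lemma card_option_sigma_gadgetVertex (m e : ℕ) :
    Fintype.card (Option (Σ i, GadgetVertex m e i)) = 5 * m + 8 * e + 1 := by
  have h5 (a : Fin m) : Fintype.card (GadgetVertex m e (.inl a)) = 5 := Fintype.card_fin 5
  have h8 (a : Fin e) : Fintype.card (GadgetVertex m e (.inr a)) = 8 := Fintype.card_fin 8
  simp [h5, h8, mul_comm]

lemma sum_card_gadgetBases (m e : ℕ) : ∑ i, #(gadgetBases m e i) = 2 * m + 3 * e := by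
  have h5 (a : Fin m) : #(gadgetBases m e (.inl a)) = 2 := rfl
  have h8 (a : Fin e) : #(gadgetBases m e (.inr a)) = 3 := rfl
  simp [h5, h8, mul_comm]

theorem stmt16 (k : ℕ) (hk : 2 ≤ k) :
    ∃ G : SimpleGraph (Fin ((5 * k + 1) / 2 + 1)), G.Connected ∧
      UniquelyKDimensional G k := by
  obtain ⟨m, e, he, rfl⟩ : ∃ m e, e ≤ 1 ∧ k = 2 * m + 3 * e :=
    ⟨(k - 3 * (k % 2)) / 2, k % 2, by omega, by omega⟩
  have hcard : Fintype.card (Option (Σ i, GadgetVertex m e i)) =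
      (5 * (2 * m + 3 * e) + 1) / 2 + 1 := by
    rw [card_option_sigma_gadgetVertex]
    omega
  let φ := Iso.map (Fintype.equivFinOfCardEq hcard) (cone (sigmaJoin (gadgets m e)))
  refine ⟨_, φ.connected_iff.1 cone_connected, φ.uniquelyKDimensional_iff.2 ?_⟩
  rw [← sum_card_gadgetBases]
  exact uniquelyKDimensional_cone_sigmaJoin (isConeGadget_gadgets m e)
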